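/- arXiv:quant-ph/0401060 — 4 statements merged into one kernel-verified Lean document; each statement's English description precedes it below -/
import Mathlib

section
/- Let M be a positive integer, let λ > 0 and ε ∈ (0,1) satisfy λ·log₂(1/ε − 1) > 2, and assume ⌊εM⌋ ≥ 1. Then there exist N subsets 𝓜₁, …, 𝓜_N of {1,…,M}, each of cardinality exactly ⌊εM⌋, with N ≥ 2^{⌊εM⌋}/M, such that for all i ≠ j the intersection satisfies |𝓜_i ∩ 𝓜_j| ≤ λ·⌊εM⌋. -/
/-!
Call two `k`-subsets of an `M`-set close when they share more than `λk` points. A maximal family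
of pairwise far subsets is dominating, so the `binom(M, k)` subsets are covered by the
neighbourhoods of its members. Such a neighbourhood has at most
`2^k (k - l + 1) binom(M, k - l)` elements, `l = ⌊λk⌋ + 1`, and
`binom(M, k) / binom(M, k - l) ≥ ((M - k) / k)^l ≥ (1/ε - 1)^l > 4^k` by the condition on `λ`.
Hence the family has more than `2^k / (k + 1)` members.
-/

open Finset

namespace Nat

theorem two_pow_le_centralBinom (n : ℕ) : 2 ^ n ≤ n.centralBinom := by
  induction n with
  | zero => simp
  | succ n ih =>
    have hdouble : 2 * n.centralBinom ≤ (n + 1).centralBinom := by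
      refine Nat.le_of_mul_le_mul_left ?_ n.succ_pos
      rw [succ_mul_centralBinom_succ]
      nlinarith
    rw [pow_succ]
    omega

theorem two_pow_le_choose {n k : ℕ} (h : 2 * k ≤ n) : 2 ^ k ≤ n.choose k :=
  (two_pow_le_centralBinom k).trans <| centralBinom_eq_two_mul_choose k ▸ choose_le_choose k h

theorem choose_le_choose_of_le_of_two_mul_le {n j m : ℕ} (hjm : j ≤ m) (hm : 2 * m ≤ n) :
    n.choose j ≤ n.choose m := by
  induction m, hjm using Nat.le_induction with
  | base => rfl
  | succ m _ ih => exact (ih (by omega)).trans (choose_le_succ_of_lt_half_left (by omega))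

theorem choose_sub_mul_pow_le (n : ℕ) {k l : ℕ} (hl : l ≤ k) :
    n.choose (k - l) * (n - k) ^ l ≤ n.choose k * k ^ l := by
  induction l with
  | zero => simp
  | succ l ih =>
    have step : n.choose (k - (l + 1)) * (n - k) ≤ n.choose (k - l) * k := by
      rw [show k - l = k - (l + 1) + 1 by omega]
      calc n.choose (k - (l + 1)) * (n - k)
          ≤ n.choose (k - (l + 1)) * (n - (k - (l + 1))) := Nat.mul_le_mul_left _ (by omega)
        _ = n.choose (k - (l + 1) + 1) * (k - (l + 1) + 1) := (choose_succ_right_eq _ _).symm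
        _ ≤ n.choose (k - (l + 1) + 1) * k := Nat.mul_le_mul_left _ (by omega)
    calc n.choose (k - (l + 1)) * (n - k) ^ (l + 1)
        = n.choose (k - (l + 1)) * (n - k) * (n - k) ^ l := by ring
      _ ≤ n.choose (k - l) * k * (n - k) ^ l := Nat.mul_le_mul_right _ step
      _ = n.choose (k - l) * (n - k) ^ l * k := by ring
      _ ≤ n.choose k * k ^ l * k := Nat.mul_le_mul_right _ (ih (by omega))
      _ = n.choose k * k ^ (l + 1) := by ring

end Nat

theorem Finset.exists_pairwise_not_rel_card_le_mul {β : Type*} [DecidableEq β] (F : Finset β)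
    (r : β → β → Prop) [DecidableRel r] (hsymm : ∀ a b, r a b → r b a)
    (hrefl : ∀ b ∈ F, r b b) (m : ℕ) (hm : ∀ a ∈ F, #{b ∈ F | r a b} ≤ m) :
    ∃ G ⊆ F, (G : Set β).Pairwise (fun a b => ¬ r a b) ∧ #F ≤ #G * m := by
  classical
  obtain ⟨G, hG, hmax⟩ := (F.powerset.filter fun G : Finset β =>
    (G : Set β).Pairwise fun a b => ¬ r a b).exists_max_image card ⟨∅, by simp⟩
  simp only [mem_filter, mem_powerset] at hG hmax
  have hdom : ∀ b ∈ F, ∃ a ∈ G, r a b := by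
    intro b hb
    by_contra! hfar
    have hbG : b ∉ G := fun h => hfar b h (hrefl b hb)
    have := hmax (insert b G) ⟨insert_subset hb hG.1, by
      rw [coe_insert]
      exact hG.2.insert fun a ha _ => ⟨fun h => hfar a ha (hsymm _ _ h), hfar a ha⟩⟩
    rw [card_insert_of_notMem hbG] at this
    omega
  refine ⟨G, hG.1, hG.2, ?_⟩
  calc #F ≤ #(G.biUnion fun a => {b ∈ F | r a b}) := card_le_card fun b hb => by
        obtain ⟨a, ha, hab⟩ := hdom b hb
        exact mem_biUnion.2 ⟨a, ha, mem_filter.2 ⟨hb, hab⟩⟩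
    _ ≤ ∑ a ∈ G, #{b ∈ F | r a b} := card_biUnion_le
    _ ≤ #G * m := sum_le_card_nsmul _ _ _ fun a ha => hm a (hG.1 ha)

theorem four_pow_lt_pow_of_two_mul_lt_mul_logb {x : ℝ} (hx : 0 < x) {k l : ℕ}
    (h : 2 * k < l * Real.logb 2 x) : (4 : ℝ) ^ k < x ^ l := by
  rw [← Real.logb_pow, Real.lt_logb_iff_rpow_lt one_lt_two (by positivity)] at h
  rw [show (2 * k : ℝ) = (2 * k : ℕ) by push_cast; ring, Real.rpow_natCast, pow_mul] at h
  norm_num at h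
  exact h

theorem two_mul_lt_of_mul_le_sub {k n : ℕ} {x : ℝ} (hk : 0 < k) (hx : 1 < x)
    (hkx : k * x ≤ n - k) : 2 * k < n := by
  have : (0 : ℝ) < k := by exact_mod_cast hk
  exact_mod_cast (by nlinarith : (2 * k : ℝ) < n)

section Packing

variable {α : Type*} [Fintype α] [DecidableEq α]

theorem card_powersetCard_filter_le_card_inter_le (A : Finset α) (k t : ℕ)
    (h : 2 * (k - t) ≤ Fintype.card α) :
    #{B ∈ powersetCard k (univ : Finset α) | t ≤ #(A ∩ B)} ≤
      2 ^ #A * ((k - t + 1) * (Fintype.card α).choose (k - t)) := by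
  set T := (range (k - t + 1)).biUnion fun j => powersetCard j (univ : Finset α)
  have hT : #T ≤ (k - t + 1) * (Fintype.card α).choose (k - t) := by
    calc #T ≤ ∑ j ∈ range (k - t + 1), #(powersetCard j (univ : Finset α)) := card_biUnion_le
      _ ≤ #(range (k - t + 1)) • (Fintype.card α).choose (k - t) :=
          sum_le_card_nsmul _ _ _ fun j hj => by
            rw [card_powersetCard, card_univ]
            exact Nat.choose_le_choose_of_le_of_two_mul_le (by simp at hj; omega) h
      _ = _ := by rw [card_range, smul_eq_mul]
  calc #{B ∈ powersetCard k univ | t ≤ #(A ∩ B)} ≤ #(A.powerset ×ˢ T) := by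
        refine card_le_card_of_injOn (fun B => (B ∩ A, B \ A)) (fun B hB => ?_) ?_
        · rw [mem_coe, mem_filter, mem_powersetCard, inter_comm] at hB
          have hsplit := card_sdiff_add_card_inter B A
          exact mem_coe.2 <| mem_product.2 ⟨mem_powerset.2 inter_subset_right, mem_biUnion.2
            ⟨#(B \ A), mem_range.2 (by omega), mem_powersetCard.2 ⟨subset_univ _, rfl⟩⟩⟩
        · intro B₁ _ B₂ _ h
          rw [← sdiff_union_inter B₁ A, ← sdiff_union_inter B₂ A]
          simp only [Prod.mk.injEq] at h
          rw [h.1, h.2]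
    _ = 2 ^ #A * #T := by rw [card_product, card_powerset]
    _ ≤ _ := Nat.mul_le_mul_left _ hT

theorem exists_packing_choose_le {k t : ℕ} (htk : t ≤ k) (h : 2 * (k - t) ≤ Fintype.card α) :
    ∃ G ⊆ powersetCard k (univ : Finset α),
      (G : Set (Finset α)).Pairwise (fun A B => #(A ∩ B) < t) ∧
      (Fintype.card α).choose k ≤
        #G * (2 ^ k * ((k - t + 1) * (Fintype.card α).choose (k - t))) := by
  obtain ⟨G, hGF, hG, hcard⟩ := exists_pairwise_not_rel_card_le_mul (powersetCard k univ)
    (fun A B => t ≤ #(A ∩ B)) (fun A B h => by simpa only [inter_comm] using h)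
    (fun B hB => by rwa [inter_self, (mem_powersetCard.1 hB).2])
    _ (fun A hA => (mem_powersetCard.1 hA).2 ▸ card_powersetCard_filter_le_card_inter_le A k t h)
  rw [card_powersetCard, card_univ] at hcard
  exact ⟨G, hGF, hG.imp fun A B h => not_le.1 h, hcard⟩

theorem exists_packing_two_pow_lt {k : ℕ} (hk : 0 < k)
    {lam x : ℝ} (hlam : lam < 1) (hx : 1 < x) (hcond : 2 < lam * Real.logb 2 x)
    (hkx : k * x ≤ Fintype.card α - k) :
    ∃ G ⊆ powersetCard k (univ : Finset α),
      (G : Set (Finset α)).Pairwise (fun A B => (#(A ∩ B) : ℝ) ≤ lam * k) ∧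
      2 ^ k < #G * (k + 1) := by
  set n := Fintype.card α
  set l := ⌊lam * k⌋₊ + 1
  have hkpos : (0 : ℝ) < k := by exact_mod_cast hk
  have hlog : 0 < Real.logb 2 x := Real.logb_pos one_lt_two hx
  have hlam0 : 0 < lam := pos_of_mul_pos_left (by linarith) hlog.le
  have hlk : l ≤ k := Nat.floor_lt (by positivity) |>.2 (by nlinarith)
  have h2k : 2 * k < n := two_mul_lt_of_mul_le_sub hk hx hkx
  obtain ⟨G, hGF, hG, hcard⟩ := exists_packing_choose_le (α := α) hlk (by omega)
  refine ⟨G, hGF, hG.imp fun A B h => ?_, ?_⟩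
  · exact (Nat.le_floor_iff (by positivity)).1 (Nat.lt_succ_iff.1 h)
  have hnat : (n - k) ^ l ≤ #G * 2 ^ k * (k + 1) * k ^ l := by
    refine Nat.le_of_mul_le_mul_left ?_ (Nat.choose_pos (by omega : k - l ≤ n))
    calc n.choose (k - l) * (n - k) ^ l ≤ n.choose k * k ^ l := Nat.choose_sub_mul_pow_le n hlk
      _ ≤ #G * (2 ^ k * ((k - l + 1) * n.choose (k - l))) * k ^ l := Nat.mul_le_mul_right _ hcard
      _ ≤ #G * (2 ^ k * ((k + 1) * n.choose (k - l))) * k ^ l := by gcongr; omega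
      _ = n.choose (k - l) * (#G * 2 ^ k * (k + 1) * k ^ l) := by ring
  have hpow : (4 : ℝ) ^ k < x ^ l := four_pow_lt_pow_of_two_mul_lt_mul_logb (by linarith) (by
    have : lam * k < l := by simpa [l] using Nat.lt_floor_add_one (lam * k)
    nlinarith)
  have hreal : (2 : ℝ) ^ k * 2 ^ k * k ^ l < #G * (k + 1) * 2 ^ k * k ^ l := calc
    (2 : ℝ) ^ k * 2 ^ k * k ^ l = k ^ l * 4 ^ k := by rw [← mul_pow]; ring
    _ < k ^ l * x ^ l := by gcongr
    _ = (k * x) ^ l := (mul_pow _ _ _).symm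
    _ ≤ ((n - k : ℕ) : ℝ) ^ l := by
        rw [Nat.cast_sub (by omega)]
        exact pow_le_pow_left₀ (by positivity) hkx _
    _ ≤ #G * 2 ^ k * (k + 1) * k ^ l := by exact_mod_cast hnat
    _ = #G * (k + 1) * 2 ^ k * k ^ l := by ring
  exact_mod_cast lt_of_mul_lt_mul_right (lt_of_mul_lt_mul_right hreal (by positivity))
    (by positivity)

theorem exists_packing_two_pow_le {k : ℕ} {lam : ℝ}
    (hlam : 1 ≤ lam) (h2k : 2 * k ≤ Fintype.card α) :
    ∃ G ⊆ powersetCard k (univ : Finset α),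
      (G : Set (Finset α)).Pairwise (fun A B => (#(A ∩ B) : ℝ) ≤ lam * k) ∧
      2 ^ k ≤ #G := by
  refine ⟨powersetCard k univ, subset_rfl, fun A hA B _ _ => ?_, ?_⟩
  · calc (#(A ∩ B) : ℝ) ≤ k := by
          exact_mod_cast (mem_powersetCard.1 hA).2 ▸ card_le_card inter_subset_left
      _ ≤ lam * k := le_mul_of_one_le_left (by positivity) hlam
  · rw [card_powersetCard, card_univ]
    exact Nat.two_pow_le_choose h2k

theorem exists_packing_two_pow_le_mul {k : ℕ} (hk : 0 < k) {lam x : ℝ} (hx : 1 < x)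
    (hcond : 2 < lam * Real.logb 2 x) (hkx : k * x ≤ Fintype.card α - k) :
    ∃ G ⊆ powersetCard k (univ : Finset α),
      (G : Set (Finset α)).Pairwise (fun A B => (#(A ∩ B) : ℝ) ≤ lam * k) ∧
      2 ^ k ≤ #G * (k + 1) := by
  rcases le_or_gt 1 lam with hlam | hlam
  · obtain ⟨G, hGk, hGint, hGcard⟩ :=
      exists_packing_two_pow_le (α := α) hlam (two_mul_lt_of_mul_le_sub hk hx hkx).le
    exact ⟨G, hGk, hGint, hGcard.trans (Nat.le_mul_of_pos_right _ k.succ_pos)⟩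
  · obtain ⟨G, hGk, hGint, hGcard⟩ := exists_packing_two_pow_lt hk hlam hx hcond hkx
    exact ⟨G, hGk, hGint, hGcard.le⟩

end Packing

theorem ahlswede_dueck_construction_general
    (M : ℕ) (lam eps : ℝ)
    (hlam : 0 < lam) (heps0 : 0 < eps)
    (hcond : lam * Real.logb 2 (1 / eps - 1) > 2)
    (hfloor : 1 ≤ ⌊eps * M⌋₊) :
    ∃ (N : ℕ) (A : Fin N → Finset (Fin M)),
      (N : ℝ) ≥ 2 ^ ⌊eps * M⌋₊ / M ∧
      (∀ i, (A i).card = ⌊eps * M⌋₊) ∧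
      (∀ i j, i ≠ j → ((A i ∩ A j).card : ℝ) ≤ lam * ⌊eps * M⌋₊) := by
  set k := ⌊eps * M⌋₊
  have hx : 1 < 1 / eps - 1 := by
    -- `Real.logb 2 y ≤ 0` whenever `|y| ≤ 1`, and `1 / ε - 1 > -1`
    by_contra! h
    have : Real.logb 2 (1 / eps - 1) ≤ 0 := by
      rw [← Real.logb_abs]
      exact Real.logb_nonpos one_lt_two (abs_nonneg _)
        (abs_le.2 ⟨by linarith [one_div_pos.2 heps0], h⟩)
    nlinarith
  have hkx : k * (1 / eps - 1) ≤ M - k := by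
    have : (k : ℝ) / eps ≤ M := (div_le_iff₀ heps0).2 <| by
      linarith [Nat.floor_le (by positivity : 0 ≤ eps * M)]
    rw [mul_sub, mul_one_div]
    linarith
  have h2k : 2 * k < M := two_mul_lt_of_mul_le_sub hfloor hx hkx
  obtain ⟨G, hGk, hGint, hGcard⟩ :=
    exists_packing_two_pow_le_mul (α := Fin M) hfloor hx hcond (by simpa using hkx)
  let e := G.equivFin.symm
  refine ⟨#G, fun i => e i, ?_, fun i => (mem_powersetCard.1 (hGk (e i).2)).2,
    fun i j hij => hGint (e i).2 (e j).2 (Subtype.val_injective.ne (e.injective.ne hij))⟩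
  rw [ge_iff_le, div_le_iff₀ (by exact_mod_cast (show 0 < M by omega))]
  calc (2 : ℝ) ^ k ≤ #G * (k + 1) := by exact_mod_cast hGcard
    _ ≤ #G * M := by gcongr; exact_mod_cast (by omega : k + 1 ≤ M)

/-- **Ahlswede–Dueck construction.**
Let `M` be a positive integer, `λ > 0` and `ε ∈ (0,1)` with `λ·log₂(1/ε − 1) > 2`,
and `⌊εM⌋ ≥ 1`. Then there exist `N ≥ 2^⌊εM⌋/M` subsets of `{1,…,M}`, each of
cardinality `⌊εM⌋`, any two distinct ones intersecting in at most `λ·⌊εM⌋` elements. -/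
theorem ahlswede_dueck_construction
    (M : ℕ) (hM : 0 < M) (lam eps : ℝ)
    (hlam : 0 < lam) (heps0 : 0 < eps) (heps1 : eps < 1)
    (hcond : lam * Real.logb 2 (1 / eps - 1) > 2)
    (hfloor : 1 ≤ ⌊eps * M⌋₊) :
    ∃ (N : ℕ) (A : Fin N → Finset (Fin M)),
      (N : ℝ) ≥ 2 ^ ⌊eps * M⌋₊ / M ∧
      (∀ i, (A i).card = ⌊eps * M⌋₊) ∧
      (∀ i j, i ≠ j → ((A i ∩ A j).card : ℝ) ≤ lam * ⌊eps * M⌋₊) :=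
  ahlswede_dueck_construction_general M lam eps hlam heps0 hcond hfloor
end

section
/- Let d be a positive integer, let λ > 0 and ε ∈ (0,1) satisfy λ·log₂(1/ε − 1) > 4, and assume ⌊εd⌋ ≥ 1. Then there exist N unit vectors ψ₁, …, ψ_N in ℂ^d with N ≥ 2^{⌊εd⌋}/d such that for all i ≠ j the squared overlap satisfies |⟨ψ_i, ψ_j⟩|² ≤ λ. -/
/-!
Encode a binary word `c ∈ {0,1}^d` as the unit vector `ψ_c = d^{-1/2} (±1)_i`, so that
`⟨ψ_c, ψ_{c'}⟩` is the normalised correlation of `c` and `c'`. A Chernoff bound, from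
`∑_{c'} exp (t · corr (c, c')) = (2 cosh t)^d ≤ 2^d exp (d t² / 2)`, shows that every word has at
most `2^{d+1} e^{-λd/2}` words whose correlation with it exceeds `√λ · d` in absolute value.
Greedily picking words and discarding such neighbours leaves at least `e^{λd/2} / 2` words with
pairwise squared overlaps at most `λ`, and the hypothesis on `λ` and `ε` (via `log x ≤ x - 1`)
gives `e^{λd/2} / 2 ≥ 2^{⌊εd⌋}`.
-/

open Finset Real

namespace Finset

theorem exists_pairwise_not_rel_card_le_mul_s1 {α : Type*} [DecidableEq α] {R : α → α → Prop}
    [DecidableRel R] (hsymm : ∀ a b, R a b → R b a) (hrefl : ∀ a, R a a) (V : ℕ) (A : Finset α)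
    (hV : ∀ a ∈ A, #{b ∈ A | R a b} ≤ V) :
    ∃ S ⊆ A, (S : Set α).Pairwise (fun a b => ¬ R a b) ∧ #A ≤ #S * V := by
  induction A using Finset.strongInduction with
  | H A ih =>
    obtain rfl | ⟨a, ha⟩ := A.eq_empty_or_nonempty
    · exact ⟨∅, by simp⟩
    set A' := {b ∈ A | ¬ R a b}
    have hA' : A' ⊂ A := filter_ssubset.2 ⟨a, ha, not_not.2 (hrefl a)⟩
    obtain ⟨S, hSA', hS, hcard⟩ := ih A' hA' fun b hb =>
      (card_le_card (monotone_filter_left _ (filter_subset _ _))).trans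
        (hV b (mem_of_mem_filter b hb))
    have haS' : ∀ b ∈ S, ¬ R a b := fun b hb => (mem_filter.1 (hSA' hb)).2
    have haS : a ∉ S := fun h => haS' a h (hrefl a)
    refine ⟨insert a S, insert_subset ha (hSA'.trans (filter_subset _ _)), ?_, ?_⟩
    · rw [coe_insert]
      exact hS.insert fun b hb _ => ⟨haS' b hb, fun h => haS' b hb (hsymm b a h)⟩
    · have hsplit := card_filter_add_card_filter_not (s := A) (p := R a)
      rw [card_insert_of_notMem haS]
      nlinarith [hV a ha]

end Finset

theorem card_filter_le_abs_le {α : Type*} (s : Finset α) (f : α → ℝ) {a t : ℝ} (ht : 0 ≤ t) :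
    (#{x ∈ s | a ≤ |f x|} : ℝ) ≤
      exp (-(t * a)) * ∑ x ∈ s, (exp (t * f x) + exp (-(t * f x))) := by
  classical
  rw [mul_sum, ← sum_filter_add_sum_filter_not s (fun x => a ≤ |f x|)]
  refine le_add_of_le_of_nonneg ?_ (sum_nonneg fun _ _ => by positivity)
  rw [card_eq_sum_ones, Nat.cast_sum, Nat.cast_one]
  refine sum_le_sum fun x hx => ?_
  have hax : t * a ≤ t * |f x| := mul_le_mul_of_nonneg_left (mem_filter.1 hx).2 ht
  rw [mul_add, ← exp_add, ← exp_add]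
  rcases abs_cases (f x) with ⟨h, _⟩ | ⟨h, _⟩ <;> rw [h] at hax
  · linarith [add_one_le_exp (-(t * a) + t * f x), exp_pos (-(t * a) + -(t * f x))]
  · linarith [add_one_le_exp (-(t * a) + -(t * f x)), exp_pos (-(t * a) + t * f x)]

section SignCode

variable {ι : Type*} [Fintype ι]

def signCorrelation (c c' : ι → Bool) : ℝ := ∑ i, if c i = c' i then 1 else -1

theorem signCorrelation_comm (c c' : ι → Bool) :
    signCorrelation c c' = signCorrelation c' c := by
  simp only [signCorrelation, eq_comm]

theorem signCorrelation_self (c : ι → Bool) : signCorrelation c c = Fintype.card ι := by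
  simp [signCorrelation]

theorem sum_exp_mul_signCorrelation [DecidableEq ι] (c : ι → Bool) (t : ℝ) :
    ∑ c', exp (t * signCorrelation c c') = (2 * cosh t) ^ Fintype.card ι := by
  have hfactor : ∀ i, ∑ b : Bool, exp (t * if c i = b then 1 else -1) = 2 * cosh t := by
    intro i
    cases c i <;> simp [cosh_eq] <;> ring
  simp only [signCorrelation, mul_sum, exp_sum]
  rw [← Fintype.prod_sum (fun i b => exp (t * if c i = b then 1 else -1)),
    prod_congr rfl fun i _ => hfactor i, prod_const, card_univ]

theorem card_le_abs_signCorrelation_le [DecidableEq ι] (c : ι → Bool) {a : ℝ} (ha : 0 ≤ a) :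
    (#{c' | a ≤ |signCorrelation c c'|} : ℝ) ≤
      2 * 2 ^ Fintype.card ι * exp (-(a ^ 2 / (2 * Fintype.card ι))) := by
  set d := Fintype.card ι
  set t := a / d
  have hcosh : (2 * cosh t) ^ d ≤ 2 ^ d * exp (d * (t ^ 2 / 2)) := by
    rw [exp_nat_mul, ← mul_pow]
    gcongr
    exact cosh_le_exp_half_sq t
  have hexponent : -(t * a) + d * (t ^ 2 / 2) = -(a ^ 2 / (2 * d)) := by
    rcases eq_or_ne (d : ℝ) 0 with hd | hd
    · simp [t, hd]
    · simp only [t]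
      field_simp
      ring
  calc (#{c' | a ≤ |signCorrelation c c'|} : ℝ)
      ≤ exp (-(t * a)) *
          ∑ c', (exp (t * signCorrelation c c') + exp (-(t * signCorrelation c c'))) :=
        card_filter_le_abs_le _ _ (by positivity)
    _ = 2 * exp (-(t * a)) * (2 * cosh t) ^ d := by
        simp only [sum_add_distrib, ← neg_mul, sum_exp_mul_signCorrelation, cosh_neg]
        ring
    _ ≤ 2 * exp (-(t * a)) * (2 ^ d * exp (d * (t ^ 2 / 2))) := by gcongr
    _ = 2 * 2 ^ d * exp (-(a ^ 2 / (2 * d))) := by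
        rw [← hexponent, exp_add]
        ring

noncomputable def fingerprint (c : ι → Bool) : EuclideanSpace ℂ ι :=
  WithLp.toLp 2 fun i => (if c i then 1 else -1) / (√(Fintype.card ι) : ℂ)

theorem inner_fingerprint (c c' : ι → Bool) :
    inner ℂ (fingerprint c) (fingerprint c') =
      ((signCorrelation c c' / Fintype.card ι : ℝ) : ℂ) := by
  have hsqrt : (√(Fintype.card ι) : ℂ) * √(Fintype.card ι) = Fintype.card ι := by
    rw [← Complex.ofReal_mul, mul_self_sqrt (Nat.cast_nonneg _), Complex.ofReal_natCast]
  simp only [fingerprint, PiLp.inner_apply, RCLike.inner_apply, signCorrelation]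
  push_cast
  rw [sum_div]
  refine sum_congr rfl fun i _ => ?_
  rw [← hsqrt]
  cases c i <;> cases c' i <;> simp [map_div₀] <;> ring

theorem norm_inner_fingerprint (c c' : ι → Bool) :
    ‖inner ℂ (fingerprint c) (fingerprint c')‖ = |signCorrelation c c'| / Fintype.card ι := by
  rw [inner_fingerprint, Complex.norm_real, norm_div, Real.norm_eq_abs, RCLike.norm_natCast]

theorem norm_fingerprint [Nonempty ι] (c : ι → Bool) : ‖fingerprint c‖ = 1 := by
  have hsq : ‖fingerprint c‖ ^ 2 = 1 := by
    rw [← inner_self_eq_norm_sq (𝕜 := ℂ), inner_fingerprint, signCorrelation_self,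
      div_self (by positivity), Complex.ofReal_one, RCLike.one_re]
  exact (pow_eq_one_iff_of_nonneg (norm_nonneg _) two_ne_zero).1 hsq

end SignCode

theorem exists_signCode {ι : Type*} [Fintype ι] [DecidableEq ι] [Nonempty ι] {s : ℝ}
    (hs0 : 0 ≤ s) (hs1 : s < 1) :
    ∃ S : Finset (ι → Bool), exp (s ^ 2 * Fintype.card ι / 2) / 2 ≤ #S ∧
      (S : Set (ι → Bool)).Pairwise fun c c' => |signCorrelation c c'| ≤ s * Fintype.card ι := by
  set d := Fintype.card ι
  have hd : (0 : ℝ) < d := by positivity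
  set R : (ι → Bool) → (ι → Bool) → Prop := fun c c' => s * d < |signCorrelation c c'|
  have hrefl : ∀ c, R c c := fun c => by
    simp only [R, signCorrelation_self, Nat.abs_cast]
    nlinarith
  have hsymm : ∀ c c', R c c' → R c' c := fun c c' => by
    simp only [R, signCorrelation_comm, imp_self]
  set B := 2 * 2 ^ d * exp (-(s ^ 2 * d / 2))
  have hV : ∀ c ∈ univ, #{c' ∈ univ | R c c'} ≤ ⌊B⌋₊ := fun c _ => by
    apply Nat.le_floor
    calc (#{c' | R c c'} : ℝ) ≤ #{c' | s * d ≤ |signCorrelation c c'|} := by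
          exact_mod_cast card_le_card (monotone_filter_right _ fun _ _ => le_of_lt)
      _ ≤ 2 * 2 ^ d * exp (-((s * d) ^ 2 / (2 * d))) :=
          card_le_abs_signCorrelation_le c (by positivity)
      _ = B := by rw [show (s * d) ^ 2 / (2 * d) = s ^ 2 * d / 2 by field_simp]
  obtain ⟨S, -, hS, hcard⟩ := exists_pairwise_not_rel_card_le_mul_s1 hsymm hrefl _ univ hV
  refine ⟨S, ?_, hS.imp fun _ _ => le_of_not_gt⟩
  have h : (2 : ℝ) ^ d ≤ #S * B := by
    calc (2 : ℝ) ^ d = #(univ : Finset (ι → Bool)) := by simp [d]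
      _ ≤ #S * ⌊B⌋₊ := by exact_mod_cast hcard
      _ ≤ #S * B := by gcongr; exact Nat.floor_le (by positivity)
  have h' : exp (s ^ 2 * d / 2) / 2 * 2 ^ d ≤ #S * 2 ^ d := by
    calc exp (s ^ 2 * d / 2) / 2 * 2 ^ d = 2 ^ d * exp (s ^ 2 * d / 2) / 2 := by ring
      _ ≤ #S * B * exp (s ^ 2 * d / 2) / 2 := by gcongr
      _ = #S * 2 ^ d := by
          simp only [B, exp_neg]
          field_simp
  exact le_of_mul_le_mul_right h' (by positivity)

theorem exists_unit_vectors_norm_inner_sq_le {ι : Type*} [Fintype ι] [DecidableEq ι]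
    [Nonempty ι] {lam : ℝ} (hlam0 : 0 < lam) (hlam1 : lam < 1) :
    ∃ (N : ℕ) (ψ : Fin N → EuclideanSpace ℂ ι), exp (lam * Fintype.card ι / 2) / 2 ≤ N ∧
      (∀ i, ‖ψ i‖ = 1) ∧ ∀ i j, i ≠ j → ‖inner ℂ (ψ i) (ψ j)‖ ^ 2 ≤ lam := by
  have hs : √lam ^ 2 = lam := sq_sqrt hlam0.le
  obtain ⟨S, hcard, hS⟩ :=
    exists_signCode (ι := ι) (sqrt_nonneg lam) ((sqrt_lt' one_pos).2 (by rwa [one_pow]))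
  rw [hs] at hcard
  refine ⟨#S, fun i => fingerprint (S.equivFin.symm i), hcard, fun i => norm_fingerprint _, ?_⟩
  intro i j hij
  have hne : (S.equivFin.symm i : ι → Bool) ≠ S.equivFin.symm j :=
    fun h => hij (S.equivFin.symm.injective (Subtype.ext h))
  rw [norm_inner_fingerprint, ← hs]
  gcongr
  rw [div_le_iff₀ (by positivity)]
  exact hS (coe_mem _) (coe_mem _) hne

theorem mul_log_two_lt_of_four_lt_mul_logb {lam eps : ℝ} (hlam : 0 < lam) (heps0 : 0 < eps)
    (heps1 : eps < 1) (hcond : lam * logb 2 (1 / eps - 1) > 4) : 4 * log 2 * eps < lam := by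
  have hlog2 : 0 < log 2 := log_pos one_lt_two
  have hpos : 0 < 1 / eps - 1 := by rw [sub_pos, lt_div_iff₀ heps0]; linarith
  have hlogb : logb 2 (1 / eps - 1) < 1 / (eps * log 2) := by
    rw [logb, div_mul_eq_div_div, div_lt_div_iff_of_pos_right hlog2]
    linarith [log_le_sub_one_of_pos hpos]
  have h : 4 < lam / (eps * log 2) := by
    calc 4 < lam * logb 2 (1 / eps - 1) := hcond
      _ ≤ lam * (1 / (eps * log 2)) := by gcongr
      _ = lam / (eps * log 2) := by ring
  rw [lt_div_iff₀ (by positivity)] at h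
  linarith

theorem two_mul_two_pow_floor_le_exp {d : ℕ} {lam eps : ℝ} (hlam : 0 < lam) (heps0 : 0 < eps)
    (heps1 : eps < 1) (hcond : lam * logb 2 (1 / eps - 1) > 4) (hfloor : 1 ≤ ⌊eps * d⌋₊) :
    2 * 2 ^ ⌊eps * d⌋₊ ≤ exp (lam * d / 2) := by
  have hlog2 : 0 < log 2 := log_pos one_lt_two
  have hfloor_le : (⌊eps * d⌋₊ : ℝ) ≤ eps * d := Nat.floor_le (by positivity)
  have hone : (1 : ℝ) ≤ ⌊eps * d⌋₊ := by exact_mod_cast hfloor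
  have hlam' := mul_log_two_lt_of_four_lt_mul_logb hlam heps0 heps1 hcond
  have hd : (0 : ℝ) ≤ d := Nat.cast_nonneg d
  calc (2 : ℝ) * 2 ^ ⌊eps * d⌋₊ = exp ((⌊eps * d⌋₊ + 1 : ℕ) * log 2) := by
        rw [exp_nat_mul, exp_log two_pos, pow_succ']
    _ ≤ exp (2 * (eps * d) * log 2) := by
        gcongr
        push_cast
        linarith
    _ ≤ exp (lam * d / 2) := by
        gcongr
        nlinarith [mul_le_mul_of_nonneg_right hlam'.le hd]

/-- **Quantum fingerprinting.**
Let `d` be a positive integer, `λ > 0` and `ε ∈ (0,1)` with `λ·log₂(1/ε − 1) > 4`,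
and `⌊εd⌋ ≥ 1`. Then there exist `N ≥ 2^⌊εd⌋/d` unit vectors `ψ₁,…,ψ_N` in `ℂ^d`
such that `|⟨ψ_i, ψ_j⟩|² ≤ λ` for all `i ≠ j`. -/
theorem quantum_fingerprinting
    (d : ℕ) (hd : 0 < d) (lam eps : ℝ)
    (hlam : 0 < lam) (heps0 : 0 < eps) (heps1 : eps < 1)
    (hcond : lam * Real.logb 2 (1 / eps - 1) > 4)
    (hfloor : 1 ≤ ⌊eps * d⌋₊) :
    ∃ (N : ℕ) (ψ : Fin N → EuclideanSpace ℂ (Fin d)),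
      (N : ℝ) ≥ 2 ^ ⌊eps * d⌋₊ / d ∧
      (∀ i, ‖ψ i‖ = 1) ∧
      (∀ i j, i ≠ j → ‖(inner ℂ (ψ i) (ψ j) : ℂ)‖ ^ 2 ≤ lam) := by
  have hpow := two_mul_two_pow_floor_le_exp hlam heps0 heps1 hcond hfloor
  have hsize : ∀ N : ℕ, (2 : ℝ) ^ ⌊eps * d⌋₊ ≤ N → (N : ℝ) ≥ 2 ^ ⌊eps * d⌋₊ / d :=
    fun N h => (div_le_self (by positivity) (by exact_mod_cast hd)).trans h
  have : Nonempty (Fin d) := ⟨⟨0, hd⟩⟩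
  rcases lt_or_ge lam 1 with hlam1 | hlam1
  · obtain ⟨N, ψ, hN, hnorm, hinner⟩ :=
      exists_unit_vectors_norm_inner_sq_le (ι := Fin d) hlam hlam1
    rw [Fintype.card_fin] at hN
    exact ⟨N, ψ, hsize N (by linarith), hnorm, hinner⟩
  · -- for `lam ≥ 1` any family of unit vectors will do, by Cauchy–Schwarz
    set ψ₀ : EuclideanSpace ℂ (Fin d) := fingerprint fun _ => true
    have hψ₀ : ‖ψ₀‖ = 1 := norm_fingerprint _
    refine ⟨2 ^ ⌊eps * d⌋₊, fun _ => ψ₀, hsize _ (by push_cast; rfl), fun _ => hψ₀,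
      fun _ _ _ => ?_⟩
    calc ‖inner ℂ ψ₀ ψ₀‖ ^ 2 ≤ (‖ψ₀‖ * ‖ψ₀‖) ^ 2 := by gcongr; exact norm_inner_le_norm _ _
      _ ≤ lam := by rwa [hψ₀, one_mul, one_pow]
end

section
/- Let {(ρ_i, D_i) : i = 1,…,N} be an ID code on B(ℂ^d) with error probabilities λ₁ of first kind and λ₂ of second kind, let M ≥ 1 and ε > 0. Then there exist N' ≥ ((1/2)·N^ε)^M functions f₁, …, f_{N'} : {1,…,M} → {1,…,N} such that: (i) for every j, (1/M)·Σ_{k=1}^M Tr(ρ_{f_j(k)} D_{f_j(k)}) ≥ 1 − λ₁; and (ii) for all j ≠ j', both (1/M)·Σ_{k=1}^M Tr(ρ_{f_j(k)} D_{f_{j'}(k)}) ≤ λ₂ + ε and (1/M)·Σ_{k=1}^M Tr(ρ_{f_{j'}(k)} D_{f_j(k)}) ≤ λ₂ + ε. Equivalently, the block-diagonal states σ_{f_j} = (1/M)·⊕_k ρ_{f_j(k)} and block-diagonal effects ⊕_k D_{f_j(k)} form an ID code on B(ℂ^d) ⊗ ℂ^M with error probabilities λ₁ and λ₂ + ε and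 N' messages. -/
open Matrix ComplexOrder BigOperators

/-- A density matrix on `ℂ^d`: positive semidefinite with trace 1. -/
def IsDensity {d : ℕ} (ρ : Matrix (Fin d) (Fin d) ℂ) : Prop :=
  ρ.PosSemidef ∧ ρ.trace = 1

/-- An effect on `ℂ^d`: `0 ≤ D ≤ I` in the Loewner order. -/
def IsEffect {d : ℕ} (D : Matrix (Fin d) (Fin d) ℂ) : Prop :=
  D.PosSemidef ∧ (1 - D).PosSemidef

/-!
Two words `a b : Fin M → Fin N` give the averaged pairing `(1/M) ∑ₖ Tr(ρ_{a k} D_{b k})`, whose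
terms are at most `1` where `a k = b k` and at most `λ₂` elsewhere. So it suffices to find at least
`((1/2) N^ε)^M` words any two of which agree in at most `εM` places. A maximal such code does it
(Gilbert–Varshamov): the Hamming balls of radius `(1 - ε)M` around its words cover all `N^M`
words, and each ball has at most `2^M N^{(1-ε)M}` elements. For `ε ≥ 1` either `N ≥ 2`, so that
`λ₂ ≥ 0` and every family works, or `N ≤ 1`, where `N^ε` does not depend on `ε` and the case
`ε = 1/2` applies.
-/

open scoped MatrixOrder in
lemma Matrix.PosSemidef.trace_mul_nonneg {n : Type*} [Fintype n] [DecidableEq n]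
    {A B : Matrix n n ℂ} (hA : A.PosSemidef) (hB : B.PosSemidef) : 0 ≤ (A * B).trace := by
  set S := CFC.sqrt A
  have hS : Sᴴ = S := (CFC.sqrt_nonneg A).posSemidef.1
  have hcycle : (A * B).trace = (Sᴴ * B * S).trace := by
    rw [hS, trace_mul_cycle, CFC.sqrt_mul_sqrt_self A hA.nonneg]
  exact hcycle ▸ (hB.conjTranspose_mul_mul_same S).trace_nonneg

lemma IsDensity.re_trace_mul_nonneg {d : ℕ} {ρ D : Matrix (Fin d) (Fin d) ℂ} (hρ : IsDensity ρ)
    (hD : IsEffect D) : 0 ≤ (ρ * D).trace.re :=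
  (Complex.nonneg_iff.mp (hρ.1.trace_mul_nonneg hD.1)).1

lemma IsDensity.re_trace_mul_le_one {d : ℕ} {ρ D : Matrix (Fin d) (Fin d) ℂ} (hρ : IsDensity ρ)
    (hD : IsEffect D) : (ρ * D).trace.re ≤ 1 := by
  have h := (Complex.nonneg_iff.mp (hρ.1.trace_mul_nonneg hD.2)).1
  rw [mul_sub, trace_sub, mul_one, hρ.2, Complex.sub_re, Complex.one_re] at h
  linarith

section HammingCode

open Finset

variable {ι α : Type*} [Fintype ι] [Fintype α] [DecidableEq α]

lemma card_hammingDist_lt_le [DecidableEq ι] [Nonempty α] (f : ι → α) (r : ℝ) :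
    (#{g | (hammingDist f g : ℝ) < r} : ℝ) ≤ 2 ^ Fintype.card ι * (Fintype.card α : ℝ) ^ r := by
  set small : Finset (Finset ι) := {S | (#S : ℝ) < r}
  set fiber : Finset ι → Finset (ι → α) :=
    fun S ↦ Fintype.piFinset fun k ↦ if k ∈ S then univ else {f k}
  have hcover : ({g | (hammingDist f g : ℝ) < r} : Finset (ι → α)) ⊆ small.biUnion fiber := by
    intro g hg
    simp only [mem_filter, mem_univ, true_and] at hg
    refine mem_biUnion.2 ⟨({k | f k ≠ g k} : Finset ι), by simpa [small, hammingDist] using hg, ?_⟩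
    simp only [fiber, Fintype.mem_piFinset]
    intro k
    by_cases hk : f k = g k <;> simp [hk]
  have hfiber : ∀ S : Finset ι, #(fiber S) = Fintype.card α ^ #S := by
    intro S
    simp [fiber, Fintype.card_piFinset, apply_ite card, prod_ite_mem]
  have hN : (1 : ℝ) ≤ Fintype.card α := by exact_mod_cast Fintype.card_pos
  calc (#{g | (hammingDist f g : ℝ) < r} : ℝ)
      ≤ ∑ S ∈ small, (#(fiber S) : ℝ) := by
        exact_mod_cast (card_le_card hcover).trans card_biUnion_le
    _ ≤ ∑ _S ∈ small, (Fintype.card α : ℝ) ^ r := by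
        refine sum_le_sum fun S hS ↦ ?_
        rw [hfiber, Nat.cast_pow, ← Real.rpow_natCast]
        exact Real.rpow_le_rpow_of_exponent_le hN (mem_filter.1 hS).2.le
    _ ≤ ∑ _S : Finset ι, (Fintype.card α : ℝ) ^ r :=
        sum_le_sum_of_subset_of_nonneg (subset_univ _) fun _ _ _ ↦ by positivity
    _ = 2 ^ Fintype.card ι * (Fintype.card α : ℝ) ^ r := by
        simp [Fintype.card_finset]

lemma exists_covering_code {r : ℝ} (hr : 0 < r) :
    ∃ C : Finset (ι → α), (∀ f ∈ C, ∀ g ∈ C, f ≠ g → r ≤ hammingDist f g) ∧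
      ∀ g, ∃ f ∈ C, (hammingDist f g : ℝ) < r := by
  classical
  set IsCode : Finset (ι → α) → Prop := fun C ↦ ∀ f ∈ C, ∀ g ∈ C, f ≠ g → r ≤ hammingDist f g
  obtain ⟨C, hCmem, hmax⟩ := exists_max_image ({C | IsCode C} : Finset (Finset (ι → α))) card
    ⟨∅, by simp [IsCode]⟩
  have hC : IsCode C := (mem_filter.1 hCmem).2
  refine ⟨C, hC, fun g ↦ ?_⟩
  by_contra! hfar
  have hg : g ∉ C := fun hg ↦ (hfar g hg).not_gt (by simpa using hr)
  have hins : IsCode (insert g C) := by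
    intro a ha b hb hab
    rcases mem_insert.1 ha with rfl | haC <;> rcases mem_insert.1 hb with rfl | hbC
    · exact absurd rfl hab
    · exact hammingDist_comm a b ▸ hfar b hbC
    · exact hfar a haC
    · exact hC a haC b hbC hab
  have := hmax _ (mem_filter.2 ⟨mem_univ _, hins⟩)
  rw [card_insert_of_notMem hg] at this
  omega

theorem exists_code_card_ge [Nonempty ι] {ε : ℝ} (hε0 : 0 < ε) (hε1 : ε < 1) :
    ∃ C : Finset (ι → α), ((1 / 2) * (Fintype.card α : ℝ) ^ ε) ^ Fintype.card ι ≤ #C ∧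
      ∀ f ∈ C, ∀ g ∈ C, f ≠ g → (1 - ε) * Fintype.card ι ≤ hammingDist f g := by
  classical
  set M := Fintype.card ι
  set N := (Fintype.card α : ℝ)
  set r := (1 - ε) * M
  have hM : 0 < M := Fintype.card_pos
  obtain ⟨C, hC, hcover⟩ := exists_covering_code (ι := ι) (α := α)
    (mul_pos (sub_pos.2 hε1) (by exact_mod_cast hM) : 0 < r)
  refine ⟨C, ?_, hC⟩
  rcases isEmpty_or_nonempty α with hα | hα
  · simp [N, Real.zero_rpow hε0.ne', hM.ne']
  have hN : 0 < N := Nat.cast_pos.2 Fintype.card_pos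
  have hcount : N ^ M ≤ #C * (2 ^ M * N ^ r) := by
    have hunion : (univ : Finset (ι → α)) ⊆ C.biUnion fun f ↦ {g | (hammingDist f g : ℝ) < r} := by
      intro g _
      obtain ⟨f, hf, hfg⟩ := hcover g
      exact mem_biUnion.2 ⟨f, hf, by simpa using hfg⟩
    calc N ^ M = (#(univ : Finset (ι → α)) : ℝ) := by simp [N, M]
      _ ≤ ∑ f ∈ C, (#{g | (hammingDist f g : ℝ) < r} : ℝ) := by
        exact_mod_cast (card_le_card hunion).trans card_biUnion_le
      _ ≤ ∑ _f ∈ C, 2 ^ M * N ^ r := sum_le_sum fun f _ ↦ card_hammingDist_lt_le f r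
      _ = #C * (2 ^ M * N ^ r) := by rw [sum_const, nsmul_eq_mul]
  have hbound : ((1 / 2) * N ^ ε) ^ M * (2 ^ M * N ^ r) = N ^ M := by
    calc _ = ((1 / 2) * 2 : ℝ) ^ M * (N ^ ε) ^ M * N ^ r := by rw [mul_pow, mul_pow]; ring
      _ = N ^ (ε * M + r) := by rw [Real.rpow_add hN, Real.rpow_mul_natCast hN.le ε M]; norm_num
      _ = N ^ M := by rw [← Real.rpow_natCast]; congr 1; simp only [r]; ring
  exact le_of_mul_le_mul_right (hbound ▸ hcount) (by positivity)

end HammingCode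

section Pairing

open Finset

variable {ι α : Type*} [Fintype ι] [DecidableEq α] {p : α → α → ℝ} {lam : ℝ}

lemma sum_le_of_hammingDist (hp1 : ∀ i j, p i j ≤ 1) (hp2 : ∀ i j, i ≠ j → p i j ≤ lam)
    (a b : ι → α) :
    ∑ k, p (a k) (b k) ≤ (Fintype.card ι - hammingDist a b : ℝ) + hammingDist a b * lam := by
  have hdiff : ∑ k with a k ≠ b k, p (a k) (b k) ≤ hammingDist a b * lam := by
    simpa [hammingDist] using sum_le_card_nsmul _ _ lam fun k hk ↦ hp2 _ _ (mem_filter.1 hk).2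
  have hagree : ∑ k with ¬a k ≠ b k, p (a k) (b k) ≤ #{k | ¬a k ≠ b k} := by
    simpa using sum_le_card_nsmul _ _ 1 fun k _ ↦ hp1 (a k) (b k)
  have hcard : (#{k | ¬a k ≠ b k} : ℝ) = Fintype.card ι - hammingDist a b := by
    rw [eq_sub_iff_add_eq, add_comm]
    exact_mod_cast card_filter_add_card_filter_not (s := univ) fun k ↦ a k ≠ b k
  rw [← sum_filter_add_sum_filter_not univ fun k ↦ a k ≠ b k]
  linarith

lemma sum_le_of_hammingDist_ge (hp0 : ∀ i j, 0 ≤ p i j) (hp1 : ∀ i j, p i j ≤ 1)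
    (hp2 : ∀ i j, i ≠ j → p i j ≤ lam) {ε : ℝ} {a b : ι → α} (hab : a ≠ b)
    (hdist : (1 - ε) * Fintype.card ι ≤ hammingDist a b) :
    ∑ k, p (a k) (b k) ≤ Fintype.card ι * (lam + ε) := by
  obtain ⟨k, hk⟩ := Function.ne_iff.1 hab
  have hlam : 0 ≤ lam := (hp0 _ _).trans (hp2 _ _ hk)
  have hdM : (hammingDist a b : ℝ) ≤ Fintype.card ι := by
    exact_mod_cast hammingDist_le_card_fintype
  calc _ ≤ (Fintype.card ι - hammingDist a b : ℝ) + hammingDist a b * lam :=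
        sum_le_of_hammingDist hp1 hp2 a b
    _ ≤ _ := by nlinarith

variable [Fintype α] [Nonempty ι]

lemma exists_family_sum_le_of_lt_one (hp0 : ∀ i j, 0 ≤ p i j) (hp1 : ∀ i j, p i j ≤ 1)
    (hp2 : ∀ i j, i ≠ j → p i j ≤ lam) {ε : ℝ} (hε0 : 0 < ε) (hε1 : ε < 1) :
    ∃ (n : ℕ) (f : Fin n → ι → α),
      ((1 / 2) * (Fintype.card α : ℝ) ^ ε) ^ Fintype.card ι ≤ n ∧
      ∀ j j', j ≠ j' → ∑ k, p (f j k) (f j' k) ≤ Fintype.card ι * (lam + ε) := by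
  obtain ⟨C, hCcard, hC⟩ := exists_code_card_ge (ι := ι) (α := α) hε0 hε1
  refine ⟨#C, fun j ↦ C.equivFin.symm j, hCcard, fun j j' hjj' ↦ ?_⟩
  have hne : (C.equivFin.symm j : ι → α) ≠ C.equivFin.symm j' :=
    Subtype.coe_injective.ne (C.equivFin.symm.injective.ne hjj')
  exact sum_le_of_hammingDist_ge hp0 hp1 hp2 hne
    (hC _ (C.equivFin.symm j).2 _ (C.equivFin.symm j').2 hne)

lemma natCast_rpow_of_le_one {n : ℕ} (hn : n ≤ 1) {x : ℝ} (hx : x ≠ 0) : (n : ℝ) ^ x = n := by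
  rcases Nat.le_one_iff_eq_zero_or_eq_one.1 hn with rfl | rfl <;> simp [Real.zero_rpow hx]

theorem exists_family_sum_le (hp0 : ∀ i j, 0 ≤ p i j) (hp1 : ∀ i j, p i j ≤ 1)
    (hp2 : ∀ i j, i ≠ j → p i j ≤ lam) {ε : ℝ} (hε0 : 0 < ε) :
    ∃ (n : ℕ) (f : Fin n → ι → α),
      ((1 / 2) * (Fintype.card α : ℝ) ^ ε) ^ Fintype.card ι ≤ n ∧
      ∀ j j', j ≠ j' → ∑ k, p (f j k) (f j' k) ≤ Fintype.card ι * (lam + ε) := by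
  rcases lt_or_ge ε 1 with hε1 | hε1
  · exact exists_family_sum_le_of_lt_one hp0 hp1 hp2 hε0 hε1
  rcases le_or_gt (Fintype.card α) 1 with hα | hα
  · obtain ⟨n, f, hn, hf⟩ :=
      exists_family_sum_le_of_lt_one (ι := ι) hp0 hp1 hp2 (ε := 1 / 2) (by norm_num) (by norm_num)
    refine ⟨n, f, ?_, fun j j' hjj' ↦ (hf j j' hjj').trans (by gcongr; linarith)⟩
    rwa [natCast_rpow_of_le_one hα hε0.ne', ← natCast_rpow_of_le_one hα (x := 1 / 2) (by norm_num)]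
  · obtain ⟨i, i', hii'⟩ := Fintype.exists_pair_of_one_lt_card hα
    have hlam : 0 ≤ lam := (hp0 i i').trans (hp2 i i' hii')
    refine ⟨⌈((1 / 2) * (Fintype.card α : ℝ) ^ ε) ^ Fintype.card ι⌉₊, fun _ _ ↦ i,
      Nat.le_ceil _, fun _ _ _ ↦ ?_⟩
    calc ∑ _k : ι, p i i ≤ ∑ _k : ι, 1 := sum_le_sum fun _ _ ↦ hp1 i i
      _ = Fintype.card ι * 1 := by simp
      _ ≤ _ := by gcongr; linarith

end Pairing

/-- **Extension of ID codes by a classical system.**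
Given an ID code `{(ρ_i, D_i) : i = 1,…,N}` on `B(ℂ^d)` with error probabilities
`λ₁, λ₂`, `M ≥ 1` and `ε > 0`, there exist `N' ≥ ((1/2) N^ε)^M` functions
`f_j : {1,…,M} → {1,…,N}` whose block-diagonal codewords
`σ_{f_j} = (1/M) ⊕_k ρ_{f_j(k)}` and effects `⊕_k D_{f_j(k)}` form an ID code on
`B(ℂ^d) ⊗ ℂ^M` with error probabilities `λ₁` and `λ₂ + ε`; equivalently stated in
terms of the averaged pairings below. -/
theorem ID_code_extension
    (d N M : ℕ) (hM : 1 ≤ M) (lam1 lam2 eps : ℝ) (heps : 0 < eps)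
    (ρ D : Fin N → Matrix (Fin d) (Fin d) ℂ)
    (hρ : ∀ i, IsDensity (ρ i))
    (hD : ∀ i, IsEffect (D i))
    (h1 : ∀ i, 1 - lam1 ≤ ((ρ i * D i).trace).re)
    (h2 : ∀ i j, i ≠ j → ((ρ i * D j).trace).re ≤ lam2) :
    ∃ (N' : ℕ) (f : Fin N' → (Fin M → Fin N)),
      (N' : ℝ) ≥ ((1 / 2) * (N : ℝ) ^ eps) ^ M ∧
      (∀ j, 1 - lam1 ≤
        (1 / (M : ℝ)) * ∑ k, ((ρ (f j k) * D (f j k)).trace).re) ∧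
      (∀ j j', j ≠ j' →
        (1 / (M : ℝ)) * ∑ k, ((ρ (f j k) * D (f j' k)).trace).re ≤ lam2 + eps ∧
        (1 / (M : ℝ)) * ∑ k, ((ρ (f j' k) * D (f j k)).trace).re ≤ lam2 + eps) := by
  have : Nonempty (Fin M) := ⟨⟨0, hM⟩⟩
  have hMpos : (0 : ℝ) < M := by exact_mod_cast hM
  obtain ⟨N', f, hN', hf⟩ := exists_family_sum_le (ι := Fin M)
    (p := fun i j ↦ ((ρ i * D j).trace).re) (fun i j ↦ (hρ i).re_trace_mul_nonneg (hD j))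
    (fun i j ↦ (hρ i).re_trace_mul_le_one (hD j)) h2 heps
  simp only [Fintype.card_fin] at hN' hf
  refine ⟨N', f, hN', fun j ↦ ?_, fun j j' hjj' ↦ ⟨?_, ?_⟩⟩ <;>
    rw [one_div_mul_eq_div]
  · rw [le_div_iff₀' hMpos]
    simpa using Finset.card_nsmul_le_sum Finset.univ _ _ fun k _ ↦ h1 (f j k)
  · exact (div_le_iff₀' hMpos).2 (hf j j' hjj')
  · exact (div_le_iff₀' hMpos).2 (hf j' j hjj'.symm)
end

section
/- Let N ≥ 2, M ≥ 1 be integers and ε > 0. Then there exist N' functions f₁, …, f_{N'} : {1,…,M} → {1,…,N} with N' ≥ ((1/2)·N^ε)^M such that for all j ≠ j', the number of agreement points satisfies |{k ∈ {1,…,M} : f_j(k) = f_{j'}(k)}| ≤ ε·M. -/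
/-!
A Gilbert–Varshamov argument. Put `t = ⌊εM⌋ + 1` and take a maximal family of functions that
pairwise agree in fewer than `t` points. By maximality the sets `{g | f, g agree in ≥ t points}`
around its members cover all `N^M` functions, and each has at most `2^M N^(M-t)` elements, so
the family has at least `N^t / 2^M ≥ (N^ε / 2)^M` members. When `M ≤ εM` any family will do.
-/

open Finset

theorem exists_pairwise_not_rel_forall_exists_rel {α : Type*} [Fintype α] [DecidableEq α]
    (r : α → α → Prop) (hrefl : ∀ a, r a a) (hsymm : ∀ a b, r a b → r b a) :
    ∃ C : Finset α, (C : Set α).Pairwise (fun a b => ¬ r a b) ∧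
      ∀ x, ∃ c ∈ C, r c x := by
  classical
  obtain ⟨C, hC, hmax⟩ := exists_max_image
    (univ.filter fun C : Finset α => (C : Set α).Pairwise (fun a b => ¬ r a b)) card
    ⟨∅, by simp⟩
  rw [mem_filter] at hC
  refine ⟨C, hC.2, fun x => ?_⟩
  by_contra! hfar
  have hx : x ∉ C := fun hxC => hfar x hxC (hrefl x)
  have hins : ((insert x C : Finset α) : Set α).Pairwise (fun a b => ¬ r a b) := by
    rw [coe_insert]
    exact hC.2.insert fun c hc _ => ⟨fun h => hfar c hc (hsymm _ _ h), hfar c hc⟩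
  have := hmax _ (mem_filter.2 ⟨mem_univ _, hins⟩)
  rw [card_insert_of_notMem hx] at this
  omega

variable {ι β : Type*} [Fintype ι] [DecidableEq β]

def agreements (f g : ι → β) : ℕ := #{i | f i = g i}

theorem agreements_comm (f g : ι → β) : agreements f g = agreements g f := by
  simp only [agreements, eq_comm]

@[simp]
theorem agreements_self (f : ι → β) : agreements f f = Fintype.card ι := by
  simp [agreements]

variable [DecidableEq ι] [Fintype β]

theorem card_filter_eqOn_le (f : ι → β) (s : Finset ι) :
    #{g : ι → β | ∀ i ∈ s, g i = f i} ≤ Fintype.card β ^ (Fintype.card ι - #s) := by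
  calc #{g : ι → β | ∀ i ∈ s, g i = f i}
      ≤ #(univ : Finset ((sᶜ : Finset ι) → β)) := by
        refine card_le_card_of_injOn (fun g i => g i) (fun _ _ => mem_univ _) ?_
        intro g hg g' hg' hgg'
        simp only [coe_filter, mem_univ, true_and] at hg hg'
        funext i
        by_cases hi : i ∈ s
        · rw [hg i hi, hg' i hi]
        · exact congrFun hgg' ⟨i, mem_compl.2 hi⟩
    _ = Fintype.card β ^ (Fintype.card ι - #s) := by simp

theorem card_filter_le_agreements_le (f : ι → β) (t : ℕ) :
    #{g | t ≤ agreements f g} ≤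
      (Fintype.card ι).choose t * Fintype.card β ^ (Fintype.card ι - t) := by
  have hcover : ({g | t ≤ agreements f g} : Finset (ι → β)) ⊆
      (powersetCard t univ).biUnion fun s => {g : ι → β | ∀ i ∈ s, g i = f i} := by
    intro g hg
    obtain ⟨s, hs, hcard⟩ := exists_subset_card_eq (mem_filter.1 hg).2
    refine mem_biUnion.2 ⟨s, mem_powersetCard.2 ⟨subset_univ s, hcard⟩, ?_⟩
    simp only [mem_filter, mem_univ, true_and]
    exact fun i hi => ((mem_filter.1 (hs hi)).2).symm
  calc #{g | t ≤ agreements f g}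
      ≤ #((powersetCard t univ).biUnion fun s => {g : ι → β | ∀ i ∈ s, g i = f i}) :=
        card_le_card hcover
    _ ≤ #(powersetCard t (univ : Finset ι)) * Fintype.card β ^ (Fintype.card ι - t) := by
        refine card_biUnion_le_card_mul _ _ _ fun s hs => ?_
        have hs := (mem_powersetCard.1 hs).2
        simpa [hs] using card_filter_eqOn_le f s
    _ = (Fintype.card ι).choose t * Fintype.card β ^ (Fintype.card ι - t) := by simp

theorem exists_pairwise_agreements_lt {t : ℕ} (ht : t ≤ Fintype.card ι) [Nonempty β] :
    ∃ C : Finset (ι → β), (C : Set (ι → β)).Pairwise (fun f g => agreements f g < t) ∧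
      Fintype.card β ^ t ≤ 2 ^ Fintype.card ι * #C := by
  obtain ⟨C, hpacked, hcover⟩ := exists_pairwise_not_rel_forall_exists_rel
    (fun f g : ι → β => t ≤ agreements f g) (fun f => by simpa using ht)
    (fun f g h => by simpa [agreements_comm] using h)
  refine ⟨C, fun f hf g hg hfg => not_le.1 (hpacked hf hg hfg), ?_⟩
  set M := Fintype.card ι
  have hball : ∀ f ∈ C, #{g | t ≤ agreements f g} ≤ 2 ^ M * Fintype.card β ^ (M - t) :=
    fun f _ => (card_filter_le_agreements_le f t).trans
      (Nat.mul_le_mul_right _ (Nat.choose_le_two_pow M t))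
  have hcount : Fintype.card β ^ M ≤ #C * (2 ^ M * Fintype.card β ^ (M - t)) := by
    calc Fintype.card β ^ M = #(univ : Finset (ι → β)) := by simp [M]
      _ ≤ #(C.biUnion fun f => {g | t ≤ agreements f g}) :=
        card_le_card fun g _ => by simpa using hcover g
      _ ≤ _ := card_biUnion_le_card_mul _ _ _ hball
  refine Nat.le_of_mul_le_mul_right (c := Fintype.card β ^ (M - t)) ?_ (by positivity)
  rw [← pow_add, Nat.add_sub_cancel' ht]
  linarith [hcount]

theorem half_mul_rpow_pow_le_div {N ε : ℝ} (hN : 1 ≤ N) {M t : ℕ} (ht : ε * M ≤ t) :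
    ((1 / 2) * N ^ ε) ^ M ≤ N ^ t / 2 ^ M := by
  have hpow : (N ^ ε) ^ M ≤ N ^ t := by
    rw [← Real.rpow_natCast, ← Real.rpow_mul (by linarith), ← Real.rpow_natCast N t]
    exact Real.rpow_le_rpow_of_exponent_le hN ht
  rw [mul_pow, one_div, inv_pow, inv_mul_eq_div]
  gcongr

theorem exists_many_rarely_agreeing_functions_general
    (N M : ℕ) (hN : 2 ≤ N) (eps : ℝ) (heps : 0 < eps) :
    ∃ (N' : ℕ) (f : Fin N' → (Fin M → Fin N)),
      (N' : ℝ) ≥ ((1 / 2) * (N : ℝ) ^ eps) ^ M ∧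
      (∀ j j', j ≠ j' →
        (({k : Fin M | f j k = f j' k}.toFinset.card : ℝ)) ≤ eps * M) := by
  have : Nonempty (Fin N) := ⟨⟨0, by omega⟩⟩
  simp only [Set.toFinset_ofPred]
  by_cases hsmall : (M : ℝ) ≤ eps * M
  · refine ⟨_, fun _ _ => Classical.arbitrary _, Nat.le_ceil _, fun j j' _ => ?_⟩
    exact le_trans (by exact_mod_cast (card_filter_le _ _).trans_eq (card_fin M)) hsmall
  set t := ⌊eps * M⌋₊ + 1
  have hεM : 0 ≤ eps * M := by positivity
  have ht : t ≤ M := by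
    have := (Nat.floor_lt hεM).2 (not_le.1 hsmall)
    omega
  obtain ⟨C, hC, hcard⟩ := exists_pairwise_agreements_lt (ι := Fin M) (β := Fin N) (by simpa)
  refine ⟨#C, fun j => C.equivFin.symm j, ?_, fun j j' hjj' => ?_⟩
  · calc ((1 / 2) * (N : ℝ) ^ eps) ^ M ≤ (N : ℝ) ^ t / 2 ^ M :=
          half_mul_rpow_pow_le_div (by exact_mod_cast (by omega : 1 ≤ N))
            (by simpa [t] using (Nat.lt_floor_add_one (eps * M)).le)
      _ ≤ #C := div_le_of_le_mul₀ (by positivity) (by positivity)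
          (by simpa [mul_comm] using (Nat.cast_le (α := ℝ)).2 hcard)
  · have hlt := hC (C.equivFin.symm j).2 (C.equivFin.symm j').2
      (by simpa [Subtype.ext_iff] using C.equivFin.symm.injective.ne hjj')
    exact (Nat.cast_le.2 (Nat.lt_succ_iff.1 hlt)).trans (Nat.floor_le hεM)

/-- **Combinatorial core of the code-extension construction.**
For integers `N ≥ 2`, `M ≥ 1` and `ε > 0`, there exist `N' ≥ ((1/2) N^ε)^M`
functions `f_j : {1,…,M} → {1,…,N}` that pairwise agree on at most `εM` points. -/
theorem exists_many_rarely_agreeing_functions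
    (N M : ℕ) (hN : 2 ≤ N) (hM : 1 ≤ M) (eps : ℝ) (heps : 0 < eps) :
    ∃ (N' : ℕ) (f : Fin N' → (Fin M → Fin N)),
      (N' : ℝ) ≥ ((1 / 2) * (N : ℝ) ^ eps) ^ M ∧
      (∀ j j', j ≠ j' →
        (({k : Fin M | f j k = f j' k}.toFinset.card : ℝ)) ≤ eps * M) :=
  exists_many_rarely_agreeing_functions_general N M hN eps heps
end
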